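/- arXiv:1612.04120 — 7 statements merged into one kernel-verified Lean document; each statement's English description precedes it below -/
import Mathlib

section
/- Under the Weierstrass decomposition hypothesis, every solution (Y_k)_{k≥0} of the system F Y_{k+1} = G Y_k has the form Y_k = Q_p · J^k · C for all k ≥ 0, for some constant vector C ∈ ℂ^p. -/
open Matrix Filter Topology

noncomputable section

/-- Euclidean (ℓ²) norm on ℂ-vectors indexed by a finite type. -/
def euclNorm {n : Type*} [Fintype n] (v : n → ℂ) : ℝ :=
  ‖(WithLp.equiv 2 (n → ℂ)).symm v‖

/-- Operator norm of a matrix, induced by the Euclidean norms. -/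
def matOpNorm {α β : Type*} [Fintype α] [Fintype β] [DecidableEq β]
    (A : Matrix α β ℂ) : ℝ :=
  ‖LinearMap.toContinuousLinearMap (Matrix.toEuclideanLin A)‖
/-- Theorem 2.1 (uniqueness of form): every solution of `F Y_{k+1} = G Y_k`
is of the form `Y_k = Q_p J^k C` for some constant vector `C ∈ ℂ^p`. -/
theorem solution_form (p q : ℕ) (hp : 1 ≤ p)
    (F G P Q : Matrix (Fin p ⊕ Fin q) (Fin p ⊕ Fin q) ℂ)
    (J : Matrix (Fin p) (Fin p) ℂ) (H : Matrix (Fin q) (Fin q) ℂ)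
    (hP : IsUnit P) (hQ : IsUnit Q) (hH : IsNilpotent H)
    (hF : P * F * Q = Matrix.fromBlocks 1 0 0 H)
    (hG : P * G * Q = Matrix.fromBlocks J 0 0 1)
    (Qp : Matrix (Fin p ⊕ Fin q) (Fin p) ℂ)
    (hQp : Qp = Q.submatrix id Sum.inl)
    (Y : ℕ → (Fin p ⊕ Fin q) → ℂ)
    (hY : ∀ k : ℕ, F.mulVec (Y (k + 1)) = G.mulVec (Y k)) :
    ∃ C : Fin p → ℂ, ∀ k : ℕ, Y k = Qp.mulVec ((J ^ k).mulVec C) := by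
  obtain ⟨n, hHn⟩ := hH
  have hQdet : IsUnit Q.det := (Matrix.isUnit_iff_isUnit_det Q).mp hQ
  have hQinv : Q * Q⁻¹ = 1 := Matrix.mul_nonsing_inv Q hQdet
  set Z : ℕ → (Fin p ⊕ Fin q) → ℂ := fun k => Q⁻¹.mulVec (Y k) with hZ
  have hYZ : ∀ k, Y k = Q.mulVec (Z k) := by
    intro k
    simp [hZ, Matrix.mulVec_mulVec, hQinv]
  have key : ∀ k, (Matrix.fromBlocks (1 : Matrix (Fin p) (Fin p) ℂ) 0 0 H).mulVec (Z (k+1))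
      = (Matrix.fromBlocks J 0 0 (1 : Matrix (Fin q) (Fin q) ℂ)).mulVec (Z k) := by
    intro k
    rw [← hF, ← hG]
    have h1 : (P * F * Q).mulVec (Z (k+1)) = P.mulVec (F.mulVec (Y (k+1))) := by
      simp [hZ, Matrix.mulVec_mulVec, Matrix.mul_assoc, hQinv]
    have h2 : (P * G * Q).mulVec (Z k) = P.mulVec (G.mulVec (Y k)) := by
      simp [hZ, Matrix.mulVec_mulVec, Matrix.mul_assoc, hQinv]
    rw [h1, h2, hY k]
  have top : ∀ k, Z (k+1) ∘ Sum.inl = J.mulVec (Z k ∘ Sum.inl) := by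
    intro k
    funext i
    have := congrFun (key k) (Sum.inl i)
    simpa [Matrix.fromBlocks_mulVec, Matrix.one_mulVec, Matrix.zero_mulVec] using this
  have bot : ∀ k, H.mulVec (Z (k+1) ∘ Sum.inr) = Z k ∘ Sum.inr := by
    intro k
    funext i
    have := congrFun (key k) (Sum.inr i)
    simpa [Matrix.fromBlocks_mulVec, Matrix.one_mulVec, Matrix.zero_mulVec] using this
  have hzer : ∀ k, Z k ∘ Sum.inr = 0 := by
    have main : ∀ j k, Z k ∘ Sum.inr = (H ^ j).mulVec (Z (k + j) ∘ Sum.inr) := by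
      intro j
      induction j with
      | zero => intro k; simp
      | succ j ih =>
        intro k
        rw [ih k, ← bot (k + j), Matrix.mulVec_mulVec, ← pow_succ]
        rfl
    intro k
    rw [main n k, hHn, Matrix.zero_mulVec]
  refine ⟨Z 0 ∘ Sum.inl, fun k => ?_⟩
  have hCk : Z k ∘ Sum.inl = (J ^ k).mulVec (Z 0 ∘ Sum.inl) := by
    induction k with
    | zero => simp
    | succ k ih =>
      rw [top k, ih, Matrix.mulVec_mulVec, ← pow_succ']
  rw [hYZ k, ← hCk]
  funext i
  have hz := congrFun (hzer k)
  simp only [hQp, Matrix.mulVec, dotProduct, Matrix.submatrix_apply, id_eq]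
  rw [Fintype.sum_sum_type]
  simp only [Function.comp_apply] at hz ⊢
  have : ∀ b : Fin q, Q i (Sum.inr b) * Z k (Sum.inr b) = 0 := by
    intro b; rw [hz b]; simp
  simp [this]
end
end

section
/- Under the Weierstrass decomposition hypothesis, an initial condition Y_0 ∈ ℂ^m is consistent — that is, there exists a solution (Y_k)_{k≥0} of F Y_{k+1} = G Y_k whose term at k = 0 equals Y_0 — if and only if Y_0 lies in the column span of Q_p. -/
open Matrix Filter Topology

noncomputable section

/-!
Multiplying the system on the left by `P` and substituting `Y = Q Z` turns it into the decoupled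
system `Z⁽¹⁾_{k+1} = J Z⁽¹⁾_k`, `H Z⁽²⁾_{k+1} = Z⁽²⁾_k`. The first block can be started anywhere;
in the second, `Z⁽²⁾_0 = H^k Z⁽²⁾_k` for every `k`, which vanishes once `H^k = 0`. So the consistent
initial values are the `Q (c, 0)`, i.e. the column span of `Q_p`.
-/

namespace Matrix

variable {n : Type*} [Fintype n] {R : Type*}

def IsDescriptorSolution [NonUnitalNonAssocSemiring R] (F G : Matrix n n R) (Y : ℕ → n → R) :
    Prop :=
  ∀ k, F *ᵥ Y (k + 1) = G *ᵥ Y k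

theorem isDescriptorSolution_mul_mul_iff [Semiring R] [DecidableEq n] {P : Matrix n n R}
    (hP : IsUnit P) (F G Q : Matrix n n R) (Z : ℕ → n → R) :
    IsDescriptorSolution (P * F * Q) (P * G * Q) Z ↔
      IsDescriptorSolution F G (fun k => Q *ᵥ Z k) := by
  simp only [IsDescriptorSolution, ← mulVec_mulVec, (mulVec_injective_of_isUnit hP).eq_iff]

theorem exists_isDescriptorSolution_iff_mul_mul [Semiring R] [DecidableEq n]
    {P Q : Matrix n n R} (hP : IsUnit P) (hQ : IsUnit Q) (F G : Matrix n n R) (y : n → R) :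
    (∃ Y, IsDescriptorSolution F G Y ∧ Y 0 = y) ↔
      ∃ Z, IsDescriptorSolution (P * F * Q) (P * G * Q) Z ∧ Q *ᵥ Z 0 = y := by
  simp only [isDescriptorSolution_mul_mul_iff hP]
  obtain ⟨_⟩ := hQ.nonempty_invertible
  refine ⟨fun ⟨Y, hY, hY0⟩ => ⟨fun k => ⅟Q *ᵥ Y k, ?_, ?_⟩, fun ⟨Z, hZ, hZ0⟩ => ⟨_, hZ, hZ0⟩⟩
  · simpa only [mulVec_mulVec, mul_invOf_self, one_mulVec] using hY
  · rw [mulVec_mulVec, mul_invOf_self, one_mulVec, hY0]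

theorem eq_zero_of_isNilpotent_of_eq_mulVec_succ [Semiring R] [DecidableEq n] {H : Matrix n n R}
    (hH : IsNilpotent H) {v : ℕ → n → R} (hv : ∀ k, v k = H *ᵥ v (k + 1)) : v 0 = 0 := by
  have hpow : ∀ k, v 0 = (H ^ k) *ᵥ v k := by
    intro k
    induction k with
    | zero => rw [pow_zero, one_mulVec]
    | succ k ih => rw [ih, hv k, mulVec_mulVec, ← pow_succ]
  obtain ⟨k, hk⟩ := hH
  rw [hpow k, hk, zero_mulVec]

variable {p q : Type*} [Fintype p] [Fintype q]

theorem mulVec_sumElim_zero {m : Type*} [NonUnitalNonAssocSemiring R] (M : Matrix m (p ⊕ q) R)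
    (c : p → R) : M *ᵥ Sum.elim c 0 = M.submatrix id Sum.inl *ᵥ c := by
  ext i
  simp [mulVec, dotProduct, Fintype.sum_sum_type]

variable [DecidableEq p] [DecidableEq q]

theorem isDescriptorSolution_fromBlocks_iff [Semiring R] (J : Matrix p p R) (H : Matrix q q R)
    (Z : ℕ → p ⊕ q → R) :
    IsDescriptorSolution (fromBlocks 1 0 0 H) (fromBlocks J 0 0 1) Z ↔
      ∀ k, Z (k + 1) ∘ Sum.inl = J *ᵥ (Z k ∘ Sum.inl) ∧
        Z k ∘ Sum.inr = H *ᵥ (Z (k + 1) ∘ Sum.inr) := by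
  simp only [IsDescriptorSolution, fromBlocks_mulVec, one_mulVec, zero_mulVec, add_zero,
    zero_add, Sum.elim_eq_iff, eq_comm (a := Z _ ∘ Sum.inr)]

theorem exists_isDescriptorSolution_fromBlocks_iff [Semiring R] (J : Matrix p p R)
    {H : Matrix q q R} (hH : IsNilpotent H) (z : p ⊕ q → R) :
    (∃ Z, IsDescriptorSolution (fromBlocks 1 0 0 H) (fromBlocks J 0 0 1) Z ∧ Z 0 = z) ↔
      ∃ c : p → R, Sum.elim c 0 = z := by
  simp only [isDescriptorSolution_fromBlocks_iff]
  constructor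
  · rintro ⟨Z, hZ, rfl⟩
    refine ⟨Z 0 ∘ Sum.inl, ?_⟩
    rw [← eq_zero_of_isNilpotent_of_eq_mulVec_succ hH (fun k => (hZ k).2), Sum.elim_comp_inl_inr]
  · rintro ⟨c, rfl⟩
    refine ⟨fun k => Sum.elim ((J ^ k) *ᵥ c) 0, fun k => ⟨?_, ?_⟩, by simp⟩
    · simp [pow_succ', mulVec_mulVec]
    · simp

end Matrix

theorem consistent_iff_colspan_general (p q : ℕ)
    (F G P Q : Matrix (Fin p ⊕ Fin q) (Fin p ⊕ Fin q) ℂ)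
    (J : Matrix (Fin p) (Fin p) ℂ) (H : Matrix (Fin q) (Fin q) ℂ)
    (hP : IsUnit P) (hQ : IsUnit Q) (hH : IsNilpotent H)
    (hF : P * F * Q = Matrix.fromBlocks 1 0 0 H)
    (hG : P * G * Q = Matrix.fromBlocks J 0 0 1)
    (Qp : Matrix (Fin p ⊕ Fin q) (Fin p) ℂ)
    (hQp : Qp = Q.submatrix id Sum.inl)
    (Y0 : (Fin p ⊕ Fin q) → ℂ) :
    (∃ Y : ℕ → (Fin p ⊕ Fin q) → ℂ,
        (∀ k : ℕ, F.mulVec (Y (k + 1)) = G.mulVec (Y k)) ∧ Y 0 = Y0) ↔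
      Y0 ∈ Submodule.span ℂ (Set.range Qpᵀ) := by
  change (∃ Y, IsDescriptorSolution F G Y ∧ Y 0 = Y0) ↔ Y0 ∈ Submodule.span ℂ (Set.range Qp.col)
  rw [exists_isDescriptorSolution_iff_mul_mul hP hQ, hF, hG, ← range_mulVecLin]
  simp only [LinearMap.mem_range, mulVecLin_apply, hQp, ← mulVec_sumElim_zero]
  constructor
  · rintro ⟨Z, hZ, rfl⟩
    obtain ⟨c, hc⟩ := (exists_isDescriptorSolution_fromBlocks_iff J hH (Z 0)).1 ⟨Z, hZ, rfl⟩
    exact ⟨c, by rw [hc]⟩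
  · rintro ⟨c, rfl⟩
    obtain ⟨Z, hZ, hZ0⟩ := (exists_isDescriptorSolution_fromBlocks_iff J hH _).2 ⟨c, rfl⟩
    exact ⟨Z, hZ, by rw [hZ0]⟩

/-- Proposition 2.1: the initial condition `Y₀` is consistent (some solution of
`F Y_{k+1} = G Y_k` starts at `Y₀`) iff `Y₀` lies in the column span of `Q_p`. -/
theorem consistent_iff_colspan (p q : ℕ) (hp : 1 ≤ p)
    (F G P Q : Matrix (Fin p ⊕ Fin q) (Fin p ⊕ Fin q) ℂ)
    (J : Matrix (Fin p) (Fin p) ℂ) (H : Matrix (Fin q) (Fin q) ℂ)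
    (hP : IsUnit P) (hQ : IsUnit Q) (hH : IsNilpotent H)
    (hF : P * F * Q = Matrix.fromBlocks 1 0 0 H)
    (hG : P * G * Q = Matrix.fromBlocks J 0 0 1)
    (Qp : Matrix (Fin p ⊕ Fin q) (Fin p) ℂ)
    (hQp : Qp = Q.submatrix id Sum.inl)
    (Y0 : (Fin p ⊕ Fin q) → ℂ) :
    (∃ Y : ℕ → (Fin p ⊕ Fin q) → ℂ,
        (∀ k : ℕ, F.mulVec (Y (k + 1)) = G.mulVec (Y k)) ∧ Y 0 = Y0) ↔
      Y0 ∈ Submodule.span ℂ (Set.range Qpᵀ) :=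
  consistent_iff_colspan_general p q F G P Q J H hP hQ hH hF hG Qp hQp Y0
end
end

section
/- Under the Weierstrass decomposition hypothesis, for every Y_0 ∈ ℂ^m the sequence Ŷ_k = Q_p · J^k · (Q_p^*Q_p)^{-1} Q_p^* · Y_0 (k ≥ 0) is a solution of the system F Y_{k+1} = G Y_k, and its initial value Ŷ_0 equals the orthogonal projection Q_p (Q_p^*Q_p)^{-1} Q_p^* Y_0 of Y_0 onto the column span of Q_p. -/
open Matrix Filter Topology

noncomputable section

/-! The first `p` columns of `P F Q` and `P G Q` are `[I; 0]` and `[J; 0]`, so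
`P F Q_p J = P G Q_p`, and `F Q_p J = G Q_p` as `P` is invertible. Multiplying on the right by
`J^k c` gives `F Q_p J^(k+1) c = G Q_p J^k c` for every `c`. -/

namespace Matrix

variable {l m n o R : Type*}

theorem fromBlocks_submatrix_id_inl (A : Matrix n l R) (B : Matrix n m R) (C : Matrix o l R)
    (D : Matrix o m R) : (fromBlocks A B C D).submatrix id Sum.inl = fromRows A C := by
  ext (i | i) j <;> rfl

theorem mul_submatrix_id [Fintype n] [Mul R] [AddCommMonoid R] (A : Matrix l n R)
    (B : Matrix n m R) (e : o → m) : A * B.submatrix id e = (A * B).submatrix id e :=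
  rfl

theorem mul_submatrix_inl_mul_eq_of_weierstrass [Fintype m] [Fintype n] [DecidableEq m]
    [DecidableEq n] [CommRing R] {F G P Q : Matrix (m ⊕ n) (m ⊕ n) R} {J : Matrix m m R}
    {H : Matrix n n R} (hP : IsUnit P) (hF : P * F * Q = fromBlocks 1 0 0 H)
    (hG : P * G * Q = fromBlocks J 0 0 1) :
    F * Q.submatrix id Sum.inl * J = G * Q.submatrix id Sum.inl := by
  have hFQ : P * (F * Q.submatrix id Sum.inl * J) = fromRows J 0 := by
    rw [← Matrix.mul_assoc, ← Matrix.mul_assoc, mul_submatrix_id, hF,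
      fromBlocks_submatrix_id_inl, fromRows_mul, Matrix.one_mul, Matrix.zero_mul]
  have hGQ : P * (G * Q.submatrix id Sum.inl) = fromRows J 0 := by
    rw [← Matrix.mul_assoc, mul_submatrix_id, hG, fromBlocks_submatrix_id_inl]
  have := hP.invertible
  exact mul_right_injective_of_invertible P (hFQ.trans hGQ.symm)

theorem mul_mulVec_pow_succ_of_mul_mul_eq [Fintype m] [Fintype n] [DecidableEq n]
    [CommSemiring R] {F G : Matrix l m R} {X : Matrix m n R} {J : Matrix n n R}
    (h : F * X * J = G * X) (c : n → R) (k : ℕ) :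
    F *ᵥ (X *ᵥ (J ^ (k + 1) *ᵥ c)) = G *ᵥ (X *ᵥ (J ^ k *ᵥ c)) := by
  simp only [mulVec_mulVec, pow_succ', ← Matrix.mul_assoc, h]

end Matrix

theorem optimal_solution_is_solution_general (p q : ℕ)
    (F G P Q : Matrix (Fin p ⊕ Fin q) (Fin p ⊕ Fin q) ℂ)
    (J : Matrix (Fin p) (Fin p) ℂ) (H : Matrix (Fin q) (Fin q) ℂ)
    (hP : IsUnit P)
    (hF : P * F * Q = Matrix.fromBlocks 1 0 0 H)
    (hG : P * G * Q = Matrix.fromBlocks J 0 0 1)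
    (Qp : Matrix (Fin p ⊕ Fin q) (Fin p) ℂ)
    (hQp : Qp = Q.submatrix id Sum.inl)
    (Y0 : (Fin p ⊕ Fin q) → ℂ) :
    (∀ k : ℕ,
      F.mulVec (Qp.mulVec ((J ^ (k + 1)).mulVec (((Qpᴴ * Qp)⁻¹ * Qpᴴ).mulVec Y0))) =
        G.mulVec (Qp.mulVec ((J ^ k).mulVec (((Qpᴴ * Qp)⁻¹ * Qpᴴ).mulVec Y0)))) ∧
      Qp.mulVec ((J ^ 0).mulVec (((Qpᴴ * Qp)⁻¹ * Qpᴴ).mulVec Y0)) =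
        Qp.mulVec (((Qpᴴ * Qp)⁻¹ * Qpᴴ).mulVec Y0) := by
  subst hQp
  exact ⟨mul_mulVec_pow_succ_of_mul_mul_eq (mul_submatrix_inl_mul_eq_of_weierstrass hP hF hG) _,
    by rw [pow_zero, one_mulVec]⟩

/-- Theorem 2.2: the optimal sequence `Ŷ_k = Q_p J^k (Q_p^*Q_p)⁻¹ Q_p^* Y₀` is a
solution of `F Y_{k+1} = G Y_k`, and its initial value is the orthogonal
projection of `Y₀` onto the column span of `Q_p`. -/
theorem optimal_solution_is_solution (p q : ℕ) (hp : 1 ≤ p)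
    (F G P Q : Matrix (Fin p ⊕ Fin q) (Fin p ⊕ Fin q) ℂ)
    (J : Matrix (Fin p) (Fin p) ℂ) (H : Matrix (Fin q) (Fin q) ℂ)
    (hP : IsUnit P) (hQ : IsUnit Q) (hH : IsNilpotent H)
    (hF : P * F * Q = Matrix.fromBlocks 1 0 0 H)
    (hG : P * G * Q = Matrix.fromBlocks J 0 0 1)
    (Qp : Matrix (Fin p ⊕ Fin q) (Fin p) ℂ)
    (hQp : Qp = Q.submatrix id Sum.inl)
    (Y0 : (Fin p ⊕ Fin q) → ℂ) :
    (∀ k : ℕ,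
      F.mulVec (Qp.mulVec ((J ^ (k + 1)).mulVec (((Qpᴴ * Qp)⁻¹ * Qpᴴ).mulVec Y0))) =
        G.mulVec (Qp.mulVec ((J ^ k).mulVec (((Qpᴴ * Qp)⁻¹ * Qpᴴ).mulVec Y0)))) ∧
      Qp.mulVec ((J ^ 0).mulVec (((Qpᴴ * Qp)⁻¹ * Qpᴴ).mulVec Y0)) =
        Qp.mulVec (((Qpᴴ * Qp)⁻¹ * Qpᴴ).mulVec Y0) :=
  optimal_solution_is_solution_general p q F G P Q J H hP hF hG Qp hQp Y0
end
end

section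
/- Under the Weierstrass decomposition hypothesis, the set E of equilibrium states of the system F Y_{k+1} = G Y_k equals the intersection of the (right) null space of F − G with the column span of Q_p: Y_* is an equilibrium state if and only if (F − G) Y_* = 0 and Y_* ∈ colspan Q_p. -/
open Matrix Filter Topology

noncomputable section

lemma nilp_fix {q : ℕ} (H : Matrix (Fin q) (Fin q) ℂ) (hH : IsNilpotent H)
    (v : Fin q → ℂ) (h : H.mulVec v = v) : v = 0 := by
  obtain ⟨n, hn⟩ := hH
  have key : ∀ k : ℕ, (H ^ k).mulVec v = v := by
    intro k
    induction k with
    | zero => simp [Matrix.one_mulVec]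
    | succ k ih =>
      rw [pow_succ, ← Matrix.mulVec_mulVec, h, ih]
  have := key n
  rw [hn, Matrix.zero_mulVec] at this
  exact this.symm

/-- Proposition 3.1 (second case): the equilibrium states are exactly the
vectors in `N_r(F - G) ∩ colspan Q_p`. -/
theorem equilibrium_iff (p q : ℕ) (hp : 1 ≤ p)
    (F G P Q : Matrix (Fin p ⊕ Fin q) (Fin p ⊕ Fin q) ℂ)
    (J : Matrix (Fin p) (Fin p) ℂ) (H : Matrix (Fin q) (Fin q) ℂ)
    (hP : IsUnit P) (hQ : IsUnit Q) (hH : IsNilpotent H)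
    (hF : P * F * Q = Matrix.fromBlocks 1 0 0 H)
    (hG : P * G * Q = Matrix.fromBlocks J 0 0 1)
    (Qp : Matrix (Fin p ⊕ Fin q) (Fin p) ℂ)
    (hQp : Qp = Q.submatrix id Sum.inl)
    (Ystar : (Fin p ⊕ Fin q) → ℂ) :
    (∃ Y : ℕ → (Fin p ⊕ Fin q) → ℂ,
        (∀ k : ℕ, F.mulVec (Y (k + 1)) = G.mulVec (Y k)) ∧ ∀ k : ℕ, Y k = Ystar) ↔
      ((F - G).mulVec Ystar = 0 ∧ Ystar ∈ Submodule.span ℂ (Set.range Qpᵀ)) := by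
  constructor
  · rintro ⟨Y, hrec, hconst⟩
    have hFG : F.mulVec Ystar = G.mulVec Ystar := by
      have := hrec 0
      rwa [hconst 1, hconst 0] at this
    have hnull : (F - G).mulVec Ystar = 0 := by
      rw [Matrix.sub_mulVec, hFG, sub_self]
    refine ⟨hnull, ?_⟩
    have hQd : IsUnit Q.det := (Matrix.isUnit_iff_isUnit_det Q).mp hQ
    set z : (Fin p ⊕ Fin q) → ℂ := Q⁻¹.mulVec Ystar with hz
    have hQz : Q.mulVec z = Ystar := by
      rw [hz, Matrix.mulVec_mulVec, Matrix.mul_nonsing_inv Q hQd, Matrix.one_mulVec]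
    have hblk : (Matrix.fromBlocks (1 : Matrix (Fin p) (Fin p) ℂ) 0 0 H).mulVec z
        = (Matrix.fromBlocks J 0 0 (1 : Matrix (Fin q) (Fin q) ℂ)).mulVec z := by
      rw [← hF, ← hG]
      simp only [← Matrix.mulVec_mulVec, hQz, hFG]
    set z1 : Fin p → ℂ := z ∘ Sum.inl with hz1
    set z2 : Fin q → ℂ := z ∘ Sum.inr with hz2
    have hzsplit : z = Sum.elim z1 z2 := by
      funext i; cases i <;> rfl
    rw [hzsplit, Matrix.fromBlocks_mulVec, Matrix.fromBlocks_mulVec] at hblk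
    have h2 : H.mulVec z2 = z2 := by
      have := congrArg (fun f => f ∘ Sum.inr) hblk
      simp only [Sum.elim_comp_inr] at this
      simpa [Matrix.zero_mulVec, Matrix.one_mulVec] using this
    have hz20 : z2 = 0 := nilp_fix H hH z2 h2
    have hY : Qp.mulVec z1 = Ystar := by
      rw [← hQz, hzsplit, hz20]
      funext i
      simp only [Matrix.mulVec, dotProduct, hQp, Matrix.submatrix_apply, id_eq,
        Fintype.sum_sum_type]
      simp
    rw [← hY]
    have : Qp.mulVec z1 ∈ LinearMap.range Qp.mulVecLin := ⟨z1, rfl⟩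
    rwa [Matrix.range_mulVecLin] at this
  · rintro ⟨hnull, -⟩
    refine ⟨fun _ => Ystar, fun k => ?_, fun _ => rfl⟩
    have : F.mulVec Ystar - G.mulVec Ystar = 0 := by
      rw [← Matrix.sub_mulVec]; exact hnull
    exact sub_eq_zero.mp this
end
end

section
/- Under the Weierstrass decomposition hypothesis, suppose there exists a constant c ∈ (0, ∞) such that ‖J^k‖ ≤ c for all k ≥ 0 (operator norm). Then every equilibrium state Y_* is stable in the sense of Lyapunov for the optimal solutions: for every ε > 0 there exists δ > 0 such that whenever Y_0 ∈ ℂ^m satisfies ‖Y_0 − Y_*‖ ≤ δ, the optimal solution Ŷ_k = Q_p J^k (Q_p^*Q_p)^{-1} Q_p^* Y_0 satisfies ‖Ŷ_k − Y_*‖ ≤ ε for all k ≥ 0. -/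
open Matrix Filter Topology

noncomputable section

/-! An equilibrium is `Y_* = Q_p w` with `J w = w`: apply `P` to `(F - G) Y_* = 0` and read off the
first block row. Since `Q_p` has full column rank, `(Q_pᴴ Q_p)⁻¹ Q_pᴴ` is a left inverse of `Q_p`, so
every `S_k = Q_p J^k (Q_pᴴ Q_p)⁻¹ Q_pᴴ` fixes `Y_*` and `Ŷ_k - Y_* = S_k (Y_0 - Y_*)`. The bound
`‖S_k‖ ≤ ‖Q_p‖ c ‖(Q_pᴴ Q_p)⁻¹ Q_pᴴ‖`, uniform in `k`, gives the stability. -/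

section Algebra

variable {R : Type*} {m n : Type*} [Fintype m] [Fintype n]

lemma Matrix.mulVec_submatrix_inl [NonUnitalNonAssocSemiring R] (Q : Matrix (m ⊕ n) (m ⊕ n) R)
    (w : m → R) : Q.submatrix id Sum.inl *ᵥ w = Q *ᵥ Sum.elim w 0 := by
  ext i
  simp [mulVec, dotProduct, Fintype.sum_sum_type]

lemma Matrix.mulVec_submatrix_inl_injective [Semiring R] [DecidableEq m] [DecidableEq n]
    {Q : Matrix (m ⊕ n) (m ⊕ n) R} (hQ : IsUnit Q) :
    Function.Injective (Q.submatrix id Sum.inl).mulVec := by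
  intro a b hab
  rw [mulVec_submatrix_inl, mulVec_submatrix_inl] at hab
  funext i
  simpa using congr_fun (mulVec_injective_of_isUnit hQ hab) (Sum.inl i)

lemma Matrix.pow_mulVec_eq_self [Semiring R] [DecidableEq m] {J : Matrix m m R} {w : m → R}
    (hw : J *ᵥ w = w) (k : ℕ) : J ^ k *ᵥ w = w := by
  induction k with
  | zero => simp
  | succ k ih => rw [pow_succ, ← mulVec_mulVec, hw, ih]

lemma Matrix.mulVec_eq_self_of_mulVec_sub_eq_zero [CommRing R] [DecidableEq m]
    {F G P Q : Matrix (m ⊕ n) (m ⊕ n) R} {J : Matrix m m R}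
    {B B' : Matrix m n R} {C C' : Matrix n m R} {D D' : Matrix n n R}
    (hF : P * F * Q = fromBlocks 1 B C D) (hG : P * G * Q = fromBlocks J B' C' D')
    {w : m → R} (hw : (F - G) *ᵥ (Q *ᵥ Sum.elim w 0) = 0) : J *ᵥ w = w := by
  have h := congr_arg (P *ᵥ ·) hw
  rw [mulVec_mulVec, mulVec_mulVec, mul_sub, sub_mul, hF, hG, sub_mulVec, mulVec_zero,
    sub_eq_zero] at h
  ext i
  simpa [fromBlocks_mulVec] using (congr_fun h (Sum.inl i)).symm

open scoped ComplexOrder in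
lemma Matrix.isUnit_conjTranspose_mul_self {𝕜 : Type*} [RCLike 𝕜] [DecidableEq n]
    {A : Matrix m n 𝕜} (hA : Function.Injective A.mulVec) :
    IsUnit (Aᴴ * A) := by
  rw [← mulVec_injective_iff_isUnit]
  change Function.Injective (Aᴴ * A).mulVecLin
  rw [← LinearMap.ker_eq_bot, ker_mulVecLin_conjTranspose_mul_self, LinearMap.ker_eq_bot]
  exact hA

lemma Matrix.inv_conjTranspose_mul_self_mul_conjTranspose_mul {𝕜 : Type*} [RCLike 𝕜]
    [DecidableEq n] {A : Matrix m n 𝕜}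
    (hA : Function.Injective A.mulVec) : (Aᴴ * A)⁻¹ * Aᴴ * A = 1 := by
  rw [Matrix.mul_assoc]
  exact nonsing_inv_mul _ ((isUnit_iff_isUnit_det _).mp (isUnit_conjTranspose_mul_self hA))

end Algebra

section Norm

-- `matOpNorm` is definitionally Mathlib's ℓ² operator norm on matrices.
open scoped Matrix.Norms.L2Operator

variable {l m n : Type*} [Fintype l] [Fintype m] [Fintype n] [DecidableEq n]

lemma euclNorm_mulVec_le (A : Matrix m n ℂ) (v : n → ℂ) :
    euclNorm (A *ᵥ v) ≤ matOpNorm A * euclNorm v :=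
  A.l2_opNorm_mulVec (WithLp.toLp 2 v)

lemma matOpNorm_mul_le [DecidableEq m] (A : Matrix l m ℂ) (B : Matrix m n ℂ) :
    matOpNorm (A * B) ≤ matOpNorm A * matOpNorm B :=
  l2_opNorm_mul A B

lemma lyapunov_stable_of_matOpNorm_le [DecidableEq m] {S : ℕ → Matrix m m ℂ} {M : ℝ}
    (hS : ∀ k, matOpNorm (S k) ≤ M) {y : m → ℂ} (hy : ∀ k, S k *ᵥ y = y) :
    ∀ ε > (0 : ℝ), ∃ δ > (0 : ℝ), ∀ Y0 : m → ℂ, euclNorm (Y0 - y) ≤ δ →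
      ∀ k, euclNorm (S k *ᵥ Y0 - y) ≤ ε := by
  have hM : 0 ≤ M := (norm_nonneg _).trans (hS 0)
  intro ε hε
  refine ⟨ε / (M + 1), by positivity, fun Y0 hY0 k => ?_⟩
  calc euclNorm (S k *ᵥ Y0 - y) = euclNorm (S k *ᵥ (Y0 - y)) := by rw [mulVec_sub, hy]
    _ ≤ M * (ε / (M + 1)) :=
      (euclNorm_mulVec_le _ _).trans (mul_le_mul (hS k) hY0 (norm_nonneg _) hM)
    _ ≤ ε := by
      rw [mul_div_assoc', div_le_iff₀ (by positivity)]
      nlinarith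

end Norm

theorem lyapunov_stable_of_bounded_powers_general (p q : ℕ)
    (F G P Q : Matrix (Fin p ⊕ Fin q) (Fin p ⊕ Fin q) ℂ)
    (J : Matrix (Fin p) (Fin p) ℂ) (H : Matrix (Fin q) (Fin q) ℂ)
    (hQ : IsUnit Q)
    (hF : P * F * Q = Matrix.fromBlocks 1 0 0 H)
    (hG : P * G * Q = Matrix.fromBlocks J 0 0 1)
    (Qp : Matrix (Fin p ⊕ Fin q) (Fin p) ℂ)
    (hQp : Qp = Q.submatrix id Sum.inl)
    (hbdd : ∃ c : ℝ, 0 < c ∧ ∀ k : ℕ, matOpNorm (J ^ k) ≤ c)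
    (Ystar : (Fin p ⊕ Fin q) → ℂ) (hFG : (F - G).mulVec Ystar = 0)
    (hmem : Ystar ∈ Submodule.span ℂ (Set.range Qpᵀ)) :
    ∀ ε > (0 : ℝ), ∃ δ > (0 : ℝ), ∀ Y0 : (Fin p ⊕ Fin q) → ℂ,
      euclNorm (Y0 - Ystar) ≤ δ →
        ∀ k : ℕ,
          euclNorm (Qp.mulVec ((J ^ k).mulVec (((Qpᴴ * Qp)⁻¹ * Qpᴴ).mulVec Y0)) - Ystar)
            ≤ ε := by
  obtain ⟨c, -, hc⟩ := hbdd
  obtain ⟨w, rfl⟩ : ∃ w, Qp *ᵥ w = Ystar := by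
    have h : Ystar ∈ LinearMap.range Qp.mulVecLin := by rwa [range_mulVecLin]
    simpa only [LinearMap.mem_range, mulVecLin_apply] using h
  have hQp_inj : Function.Injective Qp.mulVec := hQp ▸ mulVec_submatrix_inl_injective hQ
  have hJw : J *ᵥ w = w :=
    mulVec_eq_self_of_mulVec_sub_eq_zero hF hG (by rwa [hQp, mulVec_submatrix_inl] at hFG)
  set L := (Qpᴴ * Qp)⁻¹ * Qpᴴ
  have hL : L * Qp = 1 := inv_conjTranspose_mul_self_mul_conjTranspose_mul hQp_inj
  have hbound (k : ℕ) : matOpNorm (Qp * J ^ k * L) ≤ matOpNorm Qp * c * matOpNorm L :=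
    calc matOpNorm (Qp * J ^ k * L) ≤ matOpNorm Qp * matOpNorm (J ^ k) * matOpNorm L :=
          (matOpNorm_mul_le _ _).trans
            (mul_le_mul_of_nonneg_right (matOpNorm_mul_le _ _) (norm_nonneg _))
      _ ≤ matOpNorm Qp * c * matOpNorm L :=
          mul_le_mul_of_nonneg_right (mul_le_mul_of_nonneg_left (hc k) (norm_nonneg _))
            (norm_nonneg _)
  have hfix (k : ℕ) : (Qp * J ^ k * L) *ᵥ (Qp *ᵥ w) = Qp *ᵥ w := by
    rw [mulVec_mulVec, Matrix.mul_assoc, hL, Matrix.mul_one, ← mulVec_mulVec,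
      pow_mulVec_eq_self hJw]
  simpa only [mulVec_mulVec, Matrix.mul_assoc] using lyapunov_stable_of_matOpNorm_le hbound hfix

/-- Theorem 3.1 (sufficiency): if `‖J^k‖` is uniformly bounded, every
equilibrium state is Lyapunov stable for the optimal solutions. -/
theorem lyapunov_stable_of_bounded_powers (p q : ℕ) (hp : 1 ≤ p)
    (F G P Q : Matrix (Fin p ⊕ Fin q) (Fin p ⊕ Fin q) ℂ)
    (J : Matrix (Fin p) (Fin p) ℂ) (H : Matrix (Fin q) (Fin q) ℂ)
    (hP : IsUnit P) (hQ : IsUnit Q) (hH : IsNilpotent H)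
    (hF : P * F * Q = Matrix.fromBlocks 1 0 0 H)
    (hG : P * G * Q = Matrix.fromBlocks J 0 0 1)
    (Qp : Matrix (Fin p ⊕ Fin q) (Fin p) ℂ)
    (hQp : Qp = Q.submatrix id Sum.inl)
    (hbdd : ∃ c : ℝ, 0 < c ∧ ∀ k : ℕ, matOpNorm (J ^ k) ≤ c)
    (Ystar : (Fin p ⊕ Fin q) → ℂ) (hFG : (F - G).mulVec Ystar = 0)
    (hmem : Ystar ∈ Submodule.span ℂ (Set.range Qpᵀ)) :
    ∀ ε > (0 : ℝ), ∃ δ > (0 : ℝ), ∀ Y0 : (Fin p ⊕ Fin q) → ℂ,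
      euclNorm (Y0 - Ystar) ≤ δ →
        ∀ k : ℕ,
          euclNorm (Qp.mulVec ((J ^ k).mulVec (((Qpᴴ * Qp)⁻¹ * Qpᴴ).mulVec Y0)) - Ystar)
            ≤ ε :=
  lyapunov_stable_of_bounded_powers_general p q F G P Q J H hQ hF hG Qp hQp hbdd Ystar hFG hmem
end
end

section
/- Under the Weierstrass decomposition hypothesis, if every eigenvalue a of the matrix J satisfies |a| < 1 (i.e. all finite eigenvalues of the pencil sF − G lie within the open unit disc), then for every initial condition Y_0 ∈ ℂ^m the optimal solution Ŷ_k = Q_p J^k (Q_p^*Q_p)^{-1} Q_p^* Y_0 converges to the zero vector as k → ∞. -/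
/-!
By Gelfand's formula `‖J ^ k‖ ^ (1 / k)` tends to the spectral radius of `J`, which is `< 1`;
hence `‖J ^ k‖ ≤ r ^ k` eventually for some `r < 1`, so `J ^ k → 0`. The optimal solution is
the image of `J ^ k` under a fixed continuous map vanishing at `0`.
-/

open Matrix Filter Topology

noncomputable section

theorem euclNorm_zero {n : Type*} [Fintype n] : euclNorm (0 : n → ℂ) = 0 := by
  simp [euclNorm]

@[fun_prop]
theorem continuous_euclNorm {n : Type*} [Fintype n] : Continuous (euclNorm (n := n)) :=
  (PiLp.continuous_toLp 2 _).norm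

theorem tendsto_pow_atTop_nhds_zero_of_spectralRadius_lt_one {A : Type*} [NormedRing A]
    [NormedAlgebra ℂ A] [CompleteSpace A] {a : A} (ha : spectralRadius ℂ a < 1) :
    Tendsto (a ^ ·) atTop (𝓝 0) := by
  obtain ⟨r, hρr, hr1⟩ := ENNReal.lt_iff_exists_nnreal_btwn.mp ha
  have hbound : ∀ᶠ n : ℕ in atTop, ‖a ^ n‖ ≤ (r : ℝ) ^ n := by
    have hgelfand := spectrum.pow_nnnorm_pow_one_div_tendsto_nhds_spectralRadius a
    filter_upwards [hgelfand.eventually_lt_const hρr, eventually_ne_atTop 0] with n hn hn0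
    have hpow := ENNReal.rpow_lt_rpow hn (by positivity : (0 : ℝ) < n)
    rw [← ENNReal.rpow_mul, one_div, inv_mul_cancel₀ (by positivity), ENNReal.rpow_one,
      ENNReal.rpow_natCast] at hpow
    exact_mod_cast hpow.le
  exact squeeze_zero_norm' hbound
    (tendsto_pow_atTop_nhds_zero_of_lt_one r.coe_nonneg (by exact_mod_cast hr1))

-- The `L2Operator` norm makes matrices a Banach algebra without changing their entrywise topology.
open scoped Matrix.Norms.L2Operator in
theorem Matrix.tendsto_pow_atTop_nhds_zero_of_forall_norm_lt_one {n : Type*} [Fintype n]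
    [DecidableEq n] {A : Matrix n n ℂ} (hA : ∀ z ∈ spectrum ℂ A, ‖z‖ < 1) :
    Tendsto (A ^ ·) atTop (𝓝 0) := by
  cases isEmpty_or_nonempty n
  · exact tendsto_const_nhds.congr fun _ => Subsingleton.elim _ _
  · exact tendsto_pow_atTop_nhds_zero_of_spectralRadius_lt_one <|
      spectrum.spectralRadius_lt_of_forall_lt A fun z hz => by exact_mod_cast hA z hz

theorem optimal_solution_tendsto_zero_general (p q : ℕ)
    (J : Matrix (Fin p) (Fin p) ℂ)
    (Qp : Matrix (Fin p ⊕ Fin q) (Fin p) ℂ)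
    (hspec : ∀ a ∈ spectrum ℂ J, ‖a‖ < 1) :
    ∀ Y0 : (Fin p ⊕ Fin q) → ℂ,
      Tendsto
        (fun k : ℕ =>
          euclNorm (Qp.mulVec ((J ^ k).mulVec (((Qpᴴ * Qp)⁻¹ * Qpᴴ).mulVec Y0))))
        atTop (𝓝 0) := by
  intro Y0
  have hcont : Continuous fun M : Matrix (Fin p) (Fin p) ℂ =>
      euclNorm (Qp *ᵥ (M *ᵥ (((Qpᴴ * Qp)⁻¹ * Qpᴴ) *ᵥ Y0))) := by
    fun_prop
  have hlim := (hcont.tendsto 0).comp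
    (Matrix.tendsto_pow_atTop_nhds_zero_of_forall_norm_lt_one hspec)
  rwa [zero_mulVec, mulVec_zero, euclNorm_zero] at hlim

/-- Theorem 3.2 (sufficiency): if every eigenvalue of `J` lies in the open unit
disc, then every optimal solution tends to `0`. -/
theorem optimal_solution_tendsto_zero (p q : ℕ) (hp : 1 ≤ p)
    (F G P Q : Matrix (Fin p ⊕ Fin q) (Fin p ⊕ Fin q) ℂ)
    (J : Matrix (Fin p) (Fin p) ℂ) (H : Matrix (Fin q) (Fin q) ℂ)
    (hP : IsUnit P) (hQ : IsUnit Q) (hH : IsNilpotent H)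
    (hF : P * F * Q = Matrix.fromBlocks 1 0 0 H)
    (hG : P * G * Q = Matrix.fromBlocks J 0 0 1)
    (Qp : Matrix (Fin p ⊕ Fin q) (Fin p) ℂ)
    (hQp : Qp = Q.submatrix id Sum.inl)
    (hspec : ∀ a ∈ spectrum ℂ J, ‖a‖ < 1) :
    ∀ Y0 : (Fin p ⊕ Fin q) → ℂ,
      Tendsto
        (fun k : ℕ =>
          euclNorm (Qp.mulVec ((J ^ k).mulVec (((Qpᴴ * Qp)⁻¹ * Qpᴴ).mulVec Y0))))
        atTop (𝓝 0) :=
  optimal_solution_tendsto_zero_general p q J Qp hspec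
end
end

section
/- Under the Weierstrass decomposition hypothesis, if for every initial condition Y_0 ∈ ℂ^m the optimal solution Ŷ_k = Q_p J^k (Q_p^*Q_p)^{-1} Q_p^* Y_0 converges to the zero vector as k → ∞, then every eigenvalue a of the matrix J satisfies |a| < 1. -/
open Matrix Filter Topology

noncomputable section

/-!
If `J v = a v` with `v ≠ 0`, take the initial condition `Y₀ = Q_p v`. Since `Q_p` has full column
rank, `(Q_p^* Q_p)^{-1} Q_p^*` is a left inverse of `Q_p`, so `Ŷ_k = a^k Q_p v` and
`‖Ŷ_k‖ = |a|^k ‖Q_p v‖` with `‖Q_p v‖ ≠ 0`. This tends to `0` only if `|a| < 1`.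
-/

lemma euclNorm_smul {n : Type*} [Fintype n] (c : ℂ) (v : n → ℂ) :
    euclNorm (c • v) = ‖c‖ * euclNorm v :=
  norm_smul c ((WithLp.equiv 2 (n → ℂ)).symm v)

lemma euclNorm_pos {n : Type*} [Fintype n] {v : n → ℂ} (hv : v ≠ 0) : 0 < euclNorm v := by
  unfold euclNorm
  simpa using hv

namespace Matrix

variable {m n₁ n₂ : Type*} [Fintype n₁] [Fintype n₂]

lemma submatrix_inl_mulVec {R : Type*} [Semiring R] (Q : Matrix m (n₁ ⊕ n₂) R) (x : n₁ → R) :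
    Q.submatrix id Sum.inl *ᵥ x = Q *ᵥ Sum.elim x 0 := by
  ext i
  simp [mulVec, dotProduct, Fintype.sum_sum_type]

lemma mulVec_injective_submatrix_inl {R : Type*} [Semiring R] {Q : Matrix m (n₁ ⊕ n₂) R}
    (hQ : Function.Injective Q.mulVec) :
    Function.Injective (Q.submatrix id Sum.inl).mulVec := fun x y hxy => by
  simp only [submatrix_inl_mulVec] at hxy
  exact (Sum.elim_eq_iff.mp (hQ hxy)).1

open scoped ComplexOrder in
lemma inv_conjTranspose_mul_self_mul_conjTranspose_mul_self {𝕜 : Type*} [RCLike 𝕜] [Fintype m]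
    [DecidableEq n₁] {A : Matrix m n₁ 𝕜} (hA : Function.Injective A.mulVec) :
    (Aᴴ * A)⁻¹ * Aᴴ * A = 1 := by
  rw [Matrix.mul_assoc]
  exact nonsing_inv_mul _ ((isUnit_iff_isUnit_det _).mp (PosDef.conjTranspose_mul_self A hA).isUnit)

lemma exists_ne_zero_pow_mulVec_eq_smul {K : Type*} [Field K] [DecidableEq n₁]
    {A : Matrix n₁ n₁ K} {a : K} (ha : a ∈ spectrum K A) :
    ∃ v ≠ 0, ∀ k : ℕ, (A ^ k) *ᵥ v = a ^ k • v := by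
  rw [← AlgEquiv.spectrum_eq toLinAlgEquiv', ← Module.End.hasEigenvalue_iff_mem_spectrum] at ha
  obtain ⟨v, hv⟩ := ha.exists_hasEigenvector
  refine ⟨v, hv.2, fun k => ?_⟩
  rw [← toLinAlgEquiv'_apply, map_pow]
  exact hv.pow_apply k

end Matrix

lemma abs_lt_one_of_tendsto_pow_mul_nhds_zero {r c : ℝ} (hc : c ≠ 0)
    (h : Tendsto (fun k : ℕ => r ^ k * c) atTop (𝓝 0)) : |r| < 1 := by
  rw [← tendsto_pow_atTop_nhds_zero_iff]
  simpa [hc] using h.div_const c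

theorem spectrum_lt_one_of_tendsto_zero_general (p q : ℕ)
    (Q : Matrix (Fin p ⊕ Fin q) (Fin p ⊕ Fin q) ℂ)
    (J : Matrix (Fin p) (Fin p) ℂ)
    (hQ : IsUnit Q)
    (Qp : Matrix (Fin p ⊕ Fin q) (Fin p) ℂ)
    (hQp : Qp = Q.submatrix id Sum.inl)
    (hconv : ∀ Y0 : (Fin p ⊕ Fin q) → ℂ,
      Tendsto
        (fun k : ℕ =>
          euclNorm (Qp.mulVec ((J ^ k).mulVec (((Qpᴴ * Qp)⁻¹ * Qpᴴ).mulVec Y0))))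
        atTop (𝓝 0)) :
    ∀ a ∈ spectrum ℂ J, ‖a‖ < 1 := by
  intro a ha
  obtain ⟨v, hv0, hJv⟩ := exists_ne_zero_pow_mulVec_eq_smul ha
  have hQp_inj : Function.Injective Qp.mulVec :=
    hQp ▸ mulVec_injective_submatrix_inl (mulVec_injective_iff_isUnit.mpr hQ)
  have hQpv : Qp *ᵥ v ≠ 0 := by simpa using hQp_inj.ne hv0
  have hsol : ∀ k : ℕ,
      Qp *ᵥ ((J ^ k) *ᵥ (((Qpᴴ * Qp)⁻¹ * Qpᴴ) *ᵥ (Qp *ᵥ v))) = a ^ k • (Qp *ᵥ v) := by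
    intro k
    rw [mulVec_mulVec v ((Qpᴴ * Qp)⁻¹ * Qpᴴ) Qp,
      inv_conjTranspose_mul_self_mul_conjTranspose_mul_self hQp_inj, one_mulVec, hJv, mulVec_smul]
  have hlim := (hconv (Qp *ᵥ v)).congr fun k => by rw [hsol, euclNorm_smul, norm_pow]
  simpa using abs_lt_one_of_tendsto_pow_mul_nhds_zero (euclNorm_pos hQpv).ne' hlim

/-- Theorem 3.2 (necessity): if every optimal solution tends to `0`, then every
eigenvalue of `J` lies in the open unit disc. -/
theorem spectrum_lt_one_of_tendsto_zero (p q : ℕ) (hp : 1 ≤ p)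
    (F G P Q : Matrix (Fin p ⊕ Fin q) (Fin p ⊕ Fin q) ℂ)
    (J : Matrix (Fin p) (Fin p) ℂ) (H : Matrix (Fin q) (Fin q) ℂ)
    (hP : IsUnit P) (hQ : IsUnit Q) (hH : IsNilpotent H)
    (hF : P * F * Q = Matrix.fromBlocks 1 0 0 H)
    (hG : P * G * Q = Matrix.fromBlocks J 0 0 1)
    (Qp : Matrix (Fin p ⊕ Fin q) (Fin p) ℂ)
    (hQp : Qp = Q.submatrix id Sum.inl)
    (hconv : ∀ Y0 : (Fin p ⊕ Fin q) → ℂ,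
      Tendsto
        (fun k : ℕ =>
          euclNorm (Qp.mulVec ((J ^ k).mulVec (((Qpᴴ * Qp)⁻¹ * Qpᴴ).mulVec Y0))))
        atTop (𝓝 0)) :
    ∀ a ∈ spectrum ℂ J, ‖a‖ < 1 :=
  spectrum_lt_one_of_tendsto_zero_general p q Q J hQ Qp hQp hconv
end
end
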